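/- arXiv:1805.10223 — 5 statements merged into one kernel-verified Lean document; each statement's English description precedes it below -/
import Mathlib

section
/- Let R be an order in an étale ℚ-algebra K and I a fractional R-ideal with trace dual I^t = {z ∈ K : Tr_{K/ℚ}(zI) ⊆ ℤ}. Then I^t is a fractional R-ideal and has the same multiplicator ring as I, i.e., (I^t : I^t) = (I : I). -/
/-- An order in the étale ℚ-algebra `K`. -/
def IsZOrder (K : Type*) [CommRing K] [Algebra ℚ K] (R : Subalgebra ℤ K) : Prop :=
  Module.Free ℤ R ∧ Module.finrank ℤ R = Module.finrank ℚ K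

/-- A fractional `R`-ideal. -/
def IsFracIdeal {K : Type*} [CommRing K] [Algebra ℚ K] (R : Subalgebra ℤ K)
    (I : Submodule R K) : Prop :=
  I.FG ∧ ∃ x ∈ I, x ∈ nonZeroDivisors K

/-- The multiplicator ring `(I : I)` as a submodule: `{x ∈ K : xI ⊆ I}`. -/
def multSet {K : Type*} [CommRing K] [Algebra ℚ K] (R : Subalgebra ℤ K)
    (I : Submodule R K) : Set K :=
  {x | ∀ y ∈ I, x * y ∈ I}

/-- The trace dual `I^t = {z ∈ K : Tr_{K/ℚ}(zI) ⊆ ℤ}`. -/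
def traceDual {K : Type*} [CommRing K] [Algebra ℚ K] [FiniteDimensional ℚ K]
    (R : Subalgebra ℤ K) (I : Submodule R K) : Submodule R K where
  carrier := {z | ∀ y ∈ I, ∃ n : ℤ, Algebra.trace ℚ K (z * y) = (n : ℚ)}
  add_mem' := by
    intro a b ha hb y hy
    obtain ⟨n, hn⟩ := ha y hy
    obtain ⟨m, hm⟩ := hb y hy
    exact ⟨n + m, by rw [add_mul, map_add, hn, hm, Int.cast_add]⟩
  zero_mem' := by
    intro y hy
    exact ⟨0, by rw [zero_mul, map_zero, Int.cast_zero]⟩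
  smul_mem' := by
    intro c z hz y hy
    have h1 : (c • z) * y = z * (c • y) := by
      rw [Algebra.smul_def, Algebra.smul_def]; ring
    rw [h1]
    exact hz _ (I.smul_mem c hy)

/-!
Over `ℤ`, a fractional ideal `I` of an order is a full lattice in `K`, and the trace form of `K`
is nondegenerate because `K` is reduced: a nonzero `z` generates the same ideal as some nonzero
idempotent `e = y z`, and `Tr(y z) = Tr e = dim_ℚ (e K) ≠ 0`. Hence `I^t` is the lattice spanned
by the trace-dual basis of a `ℤ`-basis of `I`, so it is again fractional and `(I^t)^t = I`.
As `x I ⊆ I` forces `x I^t ⊆ I^t`, applying this to `I` and to `I^t` identifies the two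
multiplicator rings.
-/

open Module

theorem Algebra.traceForm_nondegenerate_of_isReduced (F A : Type*) [Field F] [CharZero F]
    [CommRing A] [Algebra F A] [FiniteDimensional F A] [IsReduced A] :
    (Algebra.traceForm F A).Nondegenerate := by
  refine (LinearMap.BilinForm.isSymm_iff.mp (Algebra.traceForm_isSymm F)).isRefl
    |>.nondegenerate_iff_separatingLeft.mpr fun z hz ↦ ?_
  have : IsArtinianRing A := isArtinian_of_tower F inferInstance
  have := IsArtinianRing.isSemisimpleRing_of_isReduced A
  obtain ⟨e, he, hze⟩ := IsSemisimpleRing.ideal_eq_span_idempotent (Ideal.span {z})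
  obtain ⟨y, rfl⟩ : ∃ y, y * z = e :=
    Ideal.mem_span_singleton'.mp (hze ▸ Ideal.mem_span_singleton_self e)
  have hlmul : Algebra.lmul F A (y * z) = 0 :=
    LinearMap.IsIdempotentElem.eq_zero_of_trace_eq_zero (he.map (Algebra.lmul F A))
      (by rw [← Algebra.trace_apply, mul_comm]; exact hz y)
  rw [← Ideal.span_singleton_eq_bot, hze, Ideal.span_singleton_eq_bot]
  simpa using congr($hlmul 1)

namespace Submodule.IsLattice

variable {R K V : Type*} [CommRing R] [Field K] [Algebra R K] [AddCommGroup V] [Module K V]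
  [Module R V] [IsScalarTower R K V]

variable (K) in
theorem exists_smul_mem [IsFractionRing R K] (M : Submodule R V) [IsLattice K M] (v : V) :
    ∃ r ∈ nonZeroDivisors R, r • v ∈ M := by
  have hv : v ∈ span K (M : Set V) := by rw [span_eq_top]; trivial
  obtain ⟨y, hy, r, rfl⟩ := (IsLocalization.mem_span_iff (nonZeroDivisors R)).mp hv
  refine ⟨r, r.2, ?_⟩
  rw [← algebraMap_smul K, smul_smul, IsLocalization.mul_mk'_eq_mk'_of_mul, mul_one,
    IsLocalization.mk'_self, one_smul]
  simpa using hy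

theorem eq_span_range_extendOfIsLattice [IsFractionRing R K] {κ : Type*} {M : Submodule R V}
    [IsLattice K M] (b : Basis κ R M) :
    M = span R (Set.range (b.extendOfIsLattice K)) := by
  have : Set.range (b.extendOfIsLattice K) = M.subtype '' Set.range b := by
    rw [← Set.range_comp]; ext; simp
  rw [this, ← map_span, b.span_eq, map_top, range_subtype]

theorem _root_.Module.Basis.isLattice_span {κ : Type*} [Finite κ] (b : Basis κ K V) :
    IsLattice K (span R (Set.range b)) where
  fg := fg_span (Set.finite_range b)
  span_eq_top := by rw [span_span_of_tower, b.span_eq]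

end Submodule.IsLattice

section

variable {K : Type*} [CommRing K] [Algebra ℚ K] {R : Subalgebra ℤ K}

theorem isFracIdeal_of_isLattice (I : Submodule R K) [(I.restrictScalars ℤ).IsLattice ℚ] :
    IsFracIdeal R I := by
  refine ⟨.of_restrictScalars ℤ Submodule.IsLattice.fg, ?_⟩
  obtain ⟨m, hm, hmI⟩ := Submodule.IsLattice.exists_smul_mem ℚ (I.restrictScalars ℤ) (1 : K)
  refine ⟨m • 1, hmI, ?_⟩
  rw [zsmul_one, ← map_intCast (algebraMap ℚ K)]
  exact ((Int.cast_ne_zero.mpr (nonZeroDivisors.ne_zero hm)).isUnit.map _).mem_nonZeroDivisors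

variable [FiniteDimensional ℚ K]

theorem IsZOrder.finite (hR : IsZOrder K R) : Module.Finite ℤ R := by
  have := hR.1
  rcases Nat.eq_zero_or_pos (finrank ℚ K) with h | h
  · have : Subsingleton K := finrank_zero_iff.mp h
    infer_instance
  · exact Module.finite_of_finrank_pos (hR.2 ▸ h)

theorem IsZOrder.isLattice (hR : IsZOrder K R) : (Subalgebra.toSubmodule R).IsLattice ℚ := by
  have := hR.1
  have := hR.finite
  refine .of_rank_le ℚ (Module.Finite.iff_fg.mp this) ?_
  change Module.rank ℚ K ≤ Module.rank ℤ R
  rw [← finrank_eq_rank, ← finrank_eq_rank, hR.2]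

theorem IsFracIdeal.isLattice (hR : IsZOrder K R) {I : Submodule R K} (hI : IsFracIdeal R I) :
    (I.restrictScalars ℤ).IsLattice ℚ where
  fg := have := hR.finite; hI.1.restrictScalars
  span_eq_top := by
    obtain ⟨x, hxI, hx⟩ := hI.2
    have hsurj : Function.Surjective (LinearMap.mulLeft ℚ x) :=
      LinearMap.injective_iff_surjective.mp fun a b hab ↦
        (mul_cancel_left_mem_nonZeroDivisors hx).mp hab
    rw [eq_top_iff, ← LinearMap.range_eq_top.mpr hsurj, LinearMap.range_eq_map,
      ← hR.isLattice.span_eq_top, Submodule.map_span, Submodule.span_le]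
    rintro _ ⟨r, hr, rfl⟩
    rw [SetLike.mem_coe, LinearMap.mulLeft_apply, mul_comm]
    exact Submodule.subset_span (I.smul_mem ⟨r, hr⟩ hxI)

theorem mem_traceDual {I : Submodule R K} {z : K} :
    z ∈ traceDual R I ↔ ∀ y ∈ I, ∃ n : ℤ, Algebra.trace ℚ K (z * y) = n :=
  Iff.rfl

theorem traceDual_restrictScalars (I : Submodule R K) :
    (traceDual R I).restrictScalars ℤ =
      (Algebra.traceForm ℚ K).dualSubmodule (I.restrictScalars ℤ) := by
  ext z
  simp only [Submodule.restrictScalars_mem, LinearMap.BilinForm.mem_dualSubmodule,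
    Submodule.mem_one, Algebra.traceForm_apply, algebraMap_int_eq, eq_intCast, mem_traceDual]
  exact forall₂_congr fun _ _ ↦ exists_congr fun _ ↦ eq_comm

theorem multSet_subset_multSet_traceDual (I : Submodule R K) :
    multSet R I ⊆ multSet R (traceDual R I) := fun x hx z hz y hy ↦ by
  rw [mul_comm x, mul_assoc]
  exact hz _ (hx y hy)

variable [IsReduced K]

theorem isLattice_traceDual (I : Submodule R K) [(I.restrictScalars ℤ).IsLattice ℚ] :
    ((traceDual R I).restrictScalars ℤ).IsLattice ℚ := by
  let b := Module.Free.chooseBasis ℤ (I.restrictScalars ℤ)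
  rw [traceDual_restrictScalars, Submodule.IsLattice.eq_span_range_extendOfIsLattice b,
    LinearMap.BilinForm.dualSubmodule_span_of_basis _
      (Algebra.traceForm_nondegenerate_of_isReduced ℚ K)]
  exact Module.Basis.isLattice_span _

theorem traceDual_traceDual (I : Submodule R K) [(I.restrictScalars ℤ).IsLattice ℚ] :
    traceDual R (traceDual R I) = I := by
  let b := Module.Free.chooseBasis ℤ (I.restrictScalars ℤ)
  apply Submodule.restrictScalars_injective ℤ
  rw [traceDual_restrictScalars, traceDual_restrictScalars,
    Submodule.IsLattice.eq_span_range_extendOfIsLattice b,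
    LinearMap.BilinForm.dualSubmodule_dualSubmodule_of_basis _
      (Algebra.traceForm_nondegenerate_of_isReduced ℚ K) (Algebra.traceForm_isSymm ℚ)]

end

/-- The trace dual of a fractional `R`-ideal is a fractional `R`-ideal with the same
multiplicator ring. -/
theorem stmt3 {K : Type*} [CommRing K] [Algebra ℚ K] [FiniteDimensional ℚ K] [IsReduced K]
    (R : Subalgebra ℤ K) (hR : IsZOrder K R) (I : Submodule R K) (hI : IsFracIdeal R I) :
    IsFracIdeal R (traceDual R I) ∧ multSet R (traceDual R I) = multSet R I := by
  have := hI.isLattice hR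
  have := isLattice_traceDual I
  refine ⟨isFracIdeal_of_isLattice _, subset_antisymm ?_ (multSet_subset_multSet_traceDual I)⟩
  simpa only [traceDual_traceDual] using multSet_subset_multSet_traceDual (traceDual R I)
end

section
/- Let R be an order in an étale ℚ-algebra K and I a fractional R-ideal with multiplicator ring S = (I : I). Then I decomposes as a direct sum I = I₁ ⊕ I₂ of two nonzero R-submodules which are ideals in complementary factors of K if and only if S decomposes as a product of two rings S = S₁ × S₂. Concretely: if S = S₁ × S₂ with identity elements e₁, e₂, then I = e₁I ⊕ e₂I; conversely, if I = I₁ ⊕ I₂ with I₁I₂ = 0, then (I : I) = (I₁ : I₁) ⊕ (I₂ : I₂). -/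
/-- The multiplicator ring `(I : I) = {x ∈ K : xI ⊆ I}`, as a subring of `K`. -/
def multRing {K : Type*} [CommRing K] [Algebra ℚ K] (R : Subalgebra ℤ K)
    (I : Submodule R K) : Subalgebra ℤ K where
  carrier := {x | ∀ y ∈ I, x * y ∈ I}
  mul_mem' := by
    intro a b ha hb y hy
    rw [mul_assoc]; exact ha _ (hb y hy)
  one_mem' := by intro y hy; rw [one_mul]; exact hy
  add_mem' := by
    intro a b ha hb y hy
    rw [add_mul]; exact I.add_mem (ha y hy) (hb y hy)
  zero_mem' := by intro y hy; rw [zero_mul]; exact I.zero_mem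
  algebraMap_mem' := by
    intro n y hy
    have : (algebraMap ℤ K n) * y = n • y := by
      rw [algebraMap_int_eq, eq_intCast, zsmul_eq_mul]
    rw [this]
    exact zsmul_mem hy n

/-
An idempotent `e` of `(I : I)` splits `I` as `eI ⊕ (1 - e)I`, and the two summands multiply to
zero because `e(1 - e) = 0`; they are nonzero because `I` contains a nonzerodivisor.
Conversely, since `K` is artinian, a nonzerodivisor `x = x₁ + x₂ ∈ I₁ ⊕ I₂` is a unit, and
`e = x₁ x⁻¹` acts as the identity on `I₁` and as zero on `I₂`: for `y ∈ I₁` we have `x₂ y = 0`,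
so `x₁ y = x y`. In particular `e² = (e x₁) x⁻¹ = e`, and `e` stabilises `I`.
-/

open nonZeroDivisors

namespace Submodule

section Semiring

variable {R K : Type*} [CommSemiring R] [CommRing K] [Algebra R K]

theorem map_mul_inf_map_mul_one_sub_eq_bot {e : K} (he : IsIdempotentElem e)
    (I J : Submodule R K) :
    I.map (LinearMap.mul R K e) ⊓ J.map (LinearMap.mul R K (1 - e)) = ⊥ := by
  refine eq_bot_iff.2 ?_
  rintro _ ⟨⟨x, -, rfl⟩, ⟨y, -, hyx⟩⟩
  simp only [LinearMap.mul_apply'] at hyx ⊢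
  calc e * x = e * (e * x) := by rw [← mul_assoc, he.eq]
    _ = 0 := by rw [← hyx, ← mul_assoc, he.mul_one_sub_self, zero_mul]

theorem mul_eq_zero_of_mem_map_mul_of_mem_map_mul_one_sub {e : K} (he : IsIdempotentElem e)
    {I J : Submodule R K} {x y : K} (hx : x ∈ I.map (LinearMap.mul R K e))
    (hy : y ∈ J.map (LinearMap.mul R K (1 - e))) : x * y = 0 := by
  obtain ⟨a, -, rfl⟩ := hx
  obtain ⟨b, -, rfl⟩ := hy
  calc e * a * ((1 - e) * b) = e * (1 - e) * (a * b) := by ring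
    _ = 0 := by rw [he.mul_one_sub_self, zero_mul]

theorem map_mul_ne_bot {e x : K} {I : Submodule R K} (hxI : x ∈ I) (hx : x ∈ K⁰) (he : e ≠ 0) :
    I.map (LinearMap.mul R K e) ≠ ⊥ :=
  (Submodule.ne_bot_iff _).2 ⟨e * x, mem_map_of_mem hxI, fun h => he (hx.2 e h)⟩

theorem exists_isIdempotentElem_of_isUnit_mem_sup {I₁ I₂ : Submodule R K}
    (hmul : ∀ x ∈ I₁, ∀ y ∈ I₂, x * y = 0) {x : K} (hx : x ∈ I₁ ⊔ I₂) (hu : IsUnit x) :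
    ∃ e : K, IsIdempotentElem e ∧ (∀ y ∈ I₁, e * y = y) ∧ ∀ y ∈ I₂, e * y = 0 := by
  obtain ⟨x₁, hx₁, x₂, hx₂, rfl⟩ := mem_sup.1 hx
  obtain ⟨u, hu⟩ := hu.exists_right_inv
  have he₁ : ∀ y ∈ I₁, x₁ * u * y = y := fun y hy => by
    calc x₁ * u * y = (x₁ + x₂) * u * y - u * (y * x₂) := by ring
      _ = y := by rw [hu, hmul y hy x₂ hx₂, one_mul, mul_zero, sub_zero]
  refine ⟨x₁ * u, ?_, he₁, fun y hy => ?_⟩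
  · calc x₁ * u * (x₁ * u) = x₁ * u * x₁ * u := by ring
      _ = x₁ * u := by rw [he₁ x₁ hx₁]
  · rw [mul_right_comm, hmul x₁ hx₁ y hy, zero_mul]

end Semiring

section Ring

variable {R K : Type*} [CommRing R] [CommRing K] [Algebra R K]

theorem map_mul_sup_map_mul_one_sub_eq {e : K} {I : Submodule R K} (hI : ∀ y ∈ I, e * y ∈ I) :
    I.map (LinearMap.mul R K e) ⊔ I.map (LinearMap.mul R K (1 - e)) = I := by
  refine le_antisymm (sup_le ?_ ?_) fun y hy => ?_
  · rintro _ ⟨y, hy, rfl⟩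
    exact hI y hy
  · rintro _ ⟨y, hy, rfl⟩
    simpa only [LinearMap.mul_apply', sub_mul, one_mul] using sub_mem hy (hI y hy)
  · exact mem_sup.2 ⟨e * y, mem_map_of_mem hy, (1 - e) * y, mem_map_of_mem hy, by ring⟩

end Ring

end Submodule

open Submodule in
theorem stmt6_general {K : Type*} [CommRing K] [Algebra ℚ K] [FiniteDimensional ℚ K]
    (R : Subalgebra ℤ K) (I : Submodule R K) (hI : IsFracIdeal R I) :
    (∃ e ∈ multRing R I, e ≠ 0 ∧ e ≠ 1 ∧ e * e = e) ↔
      (∃ I₁ I₂ : Submodule R K, I₁ ≠ ⊥ ∧ I₂ ≠ ⊥ ∧ I₁ ⊓ I₂ = ⊥ ∧ I₁ ⊔ I₂ = I ∧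
        ∀ x ∈ I₁, ∀ y ∈ I₂, x * y = 0) := by
  obtain ⟨-, x, hxI, hx⟩ := hI
  have : IsArtinianRing K := .of_finite ℚ K
  constructor
  · rintro ⟨e, he, he0, he1, hee⟩
    exact ⟨I.map (LinearMap.mul R K e), I.map (LinearMap.mul R K (1 - e)),
      map_mul_ne_bot hxI hx he0, map_mul_ne_bot hxI hx (sub_ne_zero.2 he1.symm),
      map_mul_inf_map_mul_one_sub_eq_bot hee I I, map_mul_sup_map_mul_one_sub_eq he,
      fun _ ha _ hb => mul_eq_zero_of_mem_map_mul_of_mem_map_mul_one_sub hee ha hb⟩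
  · rintro ⟨I₁, I₂, h₁, h₂, -, rfl, hmul⟩
    obtain ⟨e, hee, he₁, he₂⟩ := exists_isIdempotentElem_of_isUnit_mem_sup hmul hxI
      (IsArtinianRing.isUnit_of_mem_nonZeroDivisors hx)
    refine ⟨e, fun y hy => ?_, ?_, ?_, hee⟩
    · obtain ⟨y₁, hy₁, y₂, hy₂, rfl⟩ := mem_sup.1 hy
      rw [mul_add, he₁ y₁ hy₁, he₂ y₂ hy₂, add_zero]
      exact mem_sup_left hy₁
    · rintro rfl
      exact h₁ (eq_bot_iff.2 fun y hy => by simpa [eq_comm] using he₁ y hy)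
    · rintro rfl
      exact h₂ (eq_bot_iff.2 fun y hy => by simpa using he₂ y hy)

/-- `I` decomposes as a direct sum of two nonzero ideals living in complementary factors
of `K` if and only if its multiplicator ring `S = (I : I)` decomposes as a product of two
rings, i.e. contains a nontrivial idempotent. -/
theorem stmt6 {K : Type*} [CommRing K] [Algebra ℚ K] [FiniteDimensional ℚ K] [IsReduced K]
    (R : Subalgebra ℤ K) (hR : IsZOrder K R) (I : Submodule R K) (hI : IsFracIdeal R I) :
    (∃ e ∈ multRing R I, e ≠ 0 ∧ e ≠ 1 ∧ e * e = e) ↔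
      (∃ I₁ I₂ : Submodule R K, I₁ ≠ ⊥ ∧ I₂ ≠ ⊥ ∧ I₁ ⊓ I₂ = ⊥ ∧ I₁ ⊔ I₂ = I ∧
        ∀ x ∈ I₁, ∀ y ∈ I₂, x * y = 0) :=
  stmt6_general R I hI
end

section
/- Let K be a CM-algebra with complex conjugation and S an order in K stable under conjugation. Then the quotient group S^× / ⟨v·v̄ : v ∈ S^×⟩ is finite. -/
/-!
A reduced finite-dimensional `ℚ`-algebra is the product of the number fields `K ⧸ m`, `m` maximal.
Hence the units of an order embed into a finite product of unit groups of rings of integers, so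
they form a finitely generated group by Dirichlet's unit theorem, and Kronecker's theorem holds
factorwise: an integral element all of whose complex embeddings have absolute value `1` has finite
order. Since `φ ∘ σ = conj ∘ φ` for every `φ : K →+* ℂ`, each `|φ (u / ū)|` is `1`, so `u / ū` is
torsion, and `u² = (u ū) (u / ū)` shows that `S^× / ⟨v v̄⟩` is a finitely generated torsion
abelian group, hence finite.
-/

open NumberField

theorem Group.fg_of_injective_pi {G ι : Type*} [CommGroup G] [Finite ι] {H : ι → Type*}
    [∀ i, CommGroup (H i)] [∀ i, Group.FG (H i)] {f : G →* ∀ i, H i}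
    (hf : Function.Injective f) : Group.FG G := by
  have (i : ι) : Module.Finite ℤ (Additive (H i)) :=
    Module.Finite.iff_addGroup_fg.mpr inferInstance
  have : Module.Finite ℤ (Additive (∀ i, H i)) :=
    Module.Finite.equiv (AddEquiv.piAdditive H).toIntLinearEquiv.symm
  have : Module.Finite ℤ (Additive G) :=
    Module.Finite.of_injective (MonoidHom.toAdditive f).toIntLinearMap hf
  have : AddGroup.FG (Additive G) := Module.Finite.iff_addGroup_fg.mp this
  exact Group.fg_of_mul_group_fg (H := Additive G)

theorem IsZOrder.finite_s8 {K : Type*} [CommRing K] [Algebra ℚ K] [FiniteDimensional ℚ K]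
    {S : Subalgebra ℤ K} (hS : IsZOrder K S) : Module.Finite ℤ S := by
  have := hS.1
  rcases (Module.finrank ℚ K).eq_zero_or_pos with h | h
  · have : Subsingleton K := Module.finrank_zero_iff.mp h
    infer_instance
  · exact Module.finite_of_finrank_pos (hS.2 ▸ h)

theorem IsArtinianRing.eq_of_forall_mk_eq {R : Type*} [CommRing R] [IsArtinianRing R]
    [IsReduced R] {x y : R}
    (h : ∀ m : MaximalSpectrum R, Ideal.Quotient.mk m.asIdeal x = Ideal.Quotient.mk m.asIdeal y) :
    x = y :=
  (equivPi R).injective (funext h)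

section ReducedFiniteDimensional

variable {K : Type*} [CommRing K] [Algebra ℚ K] [FiniteDimensional ℚ K]

instance : IsArtinianRing K := IsArtinianRing.of_finite ℚ K

attribute [local instance] IsArtinianRing.fieldOfSubtypeIsMaximal

instance (m : MaximalSpectrum K) : NumberField (K ⧸ m.asIdeal) where
  to_charZero := charZero_of_injective_algebraMap (algebraMap ℚ (K ⧸ m.asIdeal)).injective
  to_finiteDimensional := by
    -- the field `K ⧸ m` carries its own `ℚ`-module structure, equal to the quotient one since
    -- `ℚ`-module structures are unique
    convert (inferInstance : FiniteDimensional ℚ (K ⧸ m.asIdeal))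
    · rfl
    · exact Subsingleton.elim _ _

variable [IsReduced K]

theorem isOfFinOrder_of_isIntegral_of_norm_eq_one {x : K} (hx : IsIntegral ℤ x)
    (hnorm : ∀ φ : K →+* ℂ, ‖φ x‖ = 1) : IsOfFinOrder x := by
  let toPi : K →* ∀ m : MaximalSpectrum K, K ⧸ m.asIdeal :=
    MonoidHom.pi fun m ↦ (Ideal.Quotient.mk m.asIdeal).toMonoidHom
  have htoPi : Function.Injective toPi := fun x y h ↦ IsArtinianRing.eq_of_forall_mk_eq (congrFun h)
  rw [← htoPi.isOfFinOrder_iff]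
  refine IsOfFinOrder.pi fun m ↦ isOfFinOrder_iff_pow_eq_one.mpr ?_
  obtain ⟨n, hn, hpow⟩ := Embeddings.pow_eq_one_of_norm_eq_one (K ⧸ m.asIdeal) ℂ
    (hx.map (Ideal.Quotient.mkₐ ℤ m.asIdeal)) fun φ ↦ hnorm (φ.comp (Ideal.Quotient.mk _))
  exact ⟨n, hn, hpow⟩

theorem Subalgebra.units_fg (S : Subalgebra ℤ K) [Algebra.IsIntegral ℤ S] : Group.FG Sˣ := by
  let g (m : MaximalSpectrum K) : S →ₐ[ℤ] K ⧸ m.asIdeal :=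
    (Ideal.Quotient.mkₐ ℤ m.asIdeal).comp S.val
  let f (m : MaximalSpectrum K) : Sˣ →* (𝓞 (K ⧸ m.asIdeal))ˣ :=
    Units.map <| RingOfIntegers.restrict_monoidHom (g m).toRingHom.toMonoidHom
      fun s ↦ (Algebra.IsIntegral.isIntegral s).map (g m)
  have (m : MaximalSpectrum K) : Group.FG (𝓞 (K ⧸ m.asIdeal))ˣ :=
    Group.fg_iff_monoid_fg.mpr inferInstance
  refine Group.fg_of_injective_pi (f := MonoidHom.pi f) fun u v huv ↦ ?_
  refine Units.ext <| Subtype.ext <| IsArtinianRing.eq_of_forall_mk_eq fun m ↦ ?_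
  exact congrArg (fun w ↦ ((w m : 𝓞 (K ⧸ m.asIdeal)) : K ⧸ m.asIdeal)) huv

end ReducedFiniteDimensional

namespace Subalgebra

variable {K : Type*} [CommRing K] (σ : K →+* K) {S : Subalgebra ℤ K} (hS : ∀ x ∈ S, σ x ∈ S)

def unitsMap : Sˣ →* Sˣ :=
  Units.map (σ.restrict S S hS).toMonoidHom

theorem isOfFinOrder_mul_unitsMap_inv [Algebra ℚ K] [FiniteDimensional ℚ K] [IsReduced K]
    [Algebra.IsIntegral ℤ S] (hconj : ∀ φ : K →+* ℂ, ∀ x, φ (σ x) = starRingEnd ℂ (φ x))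
    (u : Sˣ) : IsOfFinOrder (u * (unitsMap σ hS u)⁻¹) := by
  let val : Sˣ →* K := S.val.toRingHom.toMonoidHom.comp (Units.coeHom S)
  have hval : Function.Injective val := Subtype.val_injective.comp Units.val_injective
  rw [← hval.isOfFinOrder_iff]
  apply isOfFinOrder_of_isIntegral_of_norm_eq_one ((Algebra.IsIntegral.isIntegral _).map S.val)
  intro φ
  have hu : φ (u : S) * φ (u⁻¹ : Sˣ) = 1 := by
    rw [← map_mul, ← Subalgebra.coe_mul, Units.mul_inv, Subalgebra.coe_one, map_one]
  calc ‖φ (val (u * (unitsMap σ hS u)⁻¹))‖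
      = ‖φ (u : S)‖ * ‖starRingEnd ℂ (φ (u⁻¹ : Sˣ))‖ := by
        rw [← map_inv, map_mul, map_mul, norm_mul, ← hconj]; rfl
    _ = 1 := by rw [RCLike.norm_conj, ← norm_mul, hu, norm_one]

theorem isMulTorsion_units_quotient [Algebra ℚ K] [FiniteDimensional ℚ K] [IsReduced K]
    [Algebra.IsIntegral ℤ S] (hconj : ∀ φ : K →+* ℂ, ∀ x, φ (σ x) = starRingEnd ℂ (φ x))
    {N : Subgroup Sˣ} (hN : ∀ u, u * unitsMap σ hS u ∈ N) : IsMulTorsion (Sˣ ⧸ N) := by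
  intro q
  obtain ⟨u, rfl⟩ := QuotientGroup.mk_surjective q
  set c := unitsMap σ hS u
  have hsq : (u : Sˣ ⧸ N) ^ 2 = ↑(u * c⁻¹) := by
    have : u ^ 2 = (u * c) * (u * c⁻¹) := by rw [mul_mul_mul_comm, mul_inv_cancel, mul_one, sq]
    rw [← QuotientGroup.mk_pow, this, QuotientGroup.mk_mul, (QuotientGroup.eq_one_iff _).mpr (hN u)]
    exact one_mul (M := Sˣ ⧸ N) _
  refine IsOfFinOrder.of_pow (n := 2) ?_ two_ne_zero
  rw [hsq]
  exact (QuotientGroup.mk' N).isOfFinOrder (isOfFinOrder_mul_unitsMap_inv σ hS hconj u)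

end Subalgebra

theorem stmt8_general {K : Type*} [CommRing K] [Algebra ℚ K] [FiniteDimensional ℚ K] [IsReduced K]
    (σ : K ≃ₐ[ℚ] K)
    (hconj : ∀ φ : K →+* ℂ, ∀ x, φ (σ x) = starRingEnd ℂ (φ x))
    (S : Subalgebra ℤ K) (hS : IsZOrder K S) (hstable : ∀ x ∈ S, σ x ∈ S)
    (N : Subgroup (↥S)ˣ)
    (hN : N = Subgroup.closure
      {w : (↥S)ˣ | ∃ v : (↥S)ˣ, ((w : ↥S) : K) = ((v : ↥S) : K) * σ ((v : ↥S) : K)}) :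
    Finite ((↥S)ˣ ⧸ N) := by
  have := hS.finite_s8
  have : Algebra.IsIntegral ℤ S := .of_finite ℤ S
  have := S.units_fg
  refine CommGroup.finite_of_fg_isMulTorsion _ <|
    S.isMulTorsion_units_quotient σ.toRingHom hstable hconj fun u ↦ ?_
  rw [hN]
  exact Subgroup.subset_closure ⟨u, rfl⟩

/-- For a conjugation-stable order `S` in a CM-algebra `K`, the quotient of the unit
group `S^×` by the subgroup generated by the norms `v·v̄` is finite. -/
theorem stmt8 {K : Type*} [CommRing K] [Algebra ℚ K] [FiniteDimensional ℚ K] [IsReduced K]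
    (σ : K ≃ₐ[ℚ] K) (hinv : ∀ x, σ (σ x) = x)
    (hconj : ∀ φ : K →+* ℂ, ∀ x, φ (σ x) = starRingEnd ℂ (φ x))
    (S : Subalgebra ℤ K) (hS : IsZOrder K S) (hstable : ∀ x ∈ S, σ x ∈ S)
    (N : Subgroup (↥S)ˣ)
    (hN : N = Subgroup.closure
      {w : (↥S)ˣ | ∃ v : (↥S)ˣ, ((w : ↥S) : K) = ((v : ↥S) : K) * σ ((v : ↥S) : K)}) :
    Finite ((↥S)ˣ ⧸ N) :=
  stmt8_general σ hconj S hS hstable N hN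
end

section
/- Let K be a CM-algebra with complex conjugation, S an order in K with S̄ = S, and a, a' ∈ K^× two non-zero-divisors. There exists v ∈ S^× with a = v̄·a'·v and a = a' if and only if v·v̄ = 1, which holds if and only if v is a torsion element of S^×. -/
theorem self_eq_mul_mul_iff {R : Type*} [CommRing R] {a : R}
    (ha : a ∈ nonZeroDivisors R) (b c : R) : a = b * a * c ↔ c * b = 1 := by
  rw [show b * a * c = a * (c * b) by ring, eq_comm,
    ← mul_cancel_left_mem_nonZeroDivisors ha (y := 1), mul_one]

theorem IsZOrder.isIntegral {K : Type*} [CommRing K] [Algebra ℚ K] [FiniteDimensional ℚ K]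
    {S : Subalgebra ℤ K} (hS : IsZOrder K S) {x : K} (hx : x ∈ S) : IsIntegral ℤ x := by
  cases subsingleton_or_nontrivial K
  · exact Subsingleton.elim 1 x ▸ isIntegral_one
  obtain ⟨_, hrank⟩ := hS
  have : Module.Finite ℤ S := Module.finite_of_finrank_pos (hrank ▸ Module.finrank_pos)
  exact IsIntegral.of_mem_of_fg S (Submodule.fg_top _ |>.mp this.fg_top) x hx

section

variable {K : Type*} [CommRing K] [Algebra ℚ K] [FiniteDimensional ℚ K] [IsReduced K]

theorem eq_of_forall_ringHom_complex_eq {x y : K} (h : ∀ φ : K →+* ℂ, φ x = φ y) : x = y := by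
  have : IsArtinianRing K := IsArtinianRing.of_finite ℚ K
  refine (IsArtinianRing.equivPi K).injective (funext fun I => ?_)
  let := Ideal.Quotient.field I.asIdeal
  let ψ : (K ⧸ I.asIdeal) →ₐ[ℚ] ℂ := IsAlgClosed.lift
  exact ψ.injective (h (ψ.toRingHom.comp (Ideal.Quotient.mk _)))

theorem isOfFinOrder_iff_forall_norm_eq_one {x : K} (hx : IsIntegral ℤ x) :
    IsOfFinOrder x ↔ ∀ φ : K →+* ℂ, ‖φ x‖ = 1 := by
  refine ⟨fun h φ => (φ.toMonoidHom.isOfFinOrder h).norm_eq_one, fun h => ?_⟩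
  have : IsArtinianRing K := IsArtinianRing.of_finite ℚ K
  have he : Function.Injective (IsArtinianRing.equivPi K).toRingEquiv.toMonoidHom :=
    (IsArtinianRing.equivPi K).injective
  rw [← he.isOfFinOrder_iff]
  refine IsOfFinOrder.pi fun I => ?_
  let := Ideal.Quotient.field I.asIdeal
  have := NumberField.of_module_finite ℚ (K ⧸ I.asIdeal)
  obtain ⟨n, hn, hxn⟩ := NumberField.Embeddings.pow_eq_one_of_norm_eq_one _ ℂ
    (hx.map (Ideal.Quotient.mkₐ ℤ I.asIdeal)) fun ψ => h (ψ.comp (Ideal.Quotient.mk _))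
  exact isOfFinOrder_iff_pow_eq_one.mpr ⟨n, hn, hxn⟩

theorem mul_conj_eq_one_iff_forall_norm_eq_one {σ : K → K}
    (hconj : ∀ φ : K →+* ℂ, ∀ x, φ (σ x) = starRingEnd ℂ (φ x)) (x : K) :
    x * σ x = 1 ↔ ∀ φ : K →+* ℂ, ‖φ x‖ = 1 := by
  have hφ (φ : K →+* ℂ) : φ (x * σ x) = ((‖φ x‖ ^ 2 : ℝ) : ℂ) := by
    rw [map_mul, hconj, Complex.mul_conj', Complex.ofReal_pow]
  refine ⟨fun h φ => ?_, fun h => eq_of_forall_ringHom_complex_eq fun φ => ?_⟩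
  · have hsq : ‖φ x‖ ^ 2 = 1 := by exact_mod_cast (h ▸ hφ φ).symm.trans (map_one φ)
    exact (pow_eq_one_iff_of_nonneg (norm_nonneg _) two_ne_zero).mp hsq
  · rw [hφ, h, map_one]
    norm_num

end

theorem stmt13_general {K : Type*} [CommRing K] [Algebra ℚ K] [FiniteDimensional ℚ K] [IsReduced K]
    (σ : K ≃ₐ[ℚ] K)
    (hconj : ∀ φ : K →+* ℂ, ∀ x, φ (σ x) = starRingEnd ℂ (φ x))
    (S : Subalgebra ℤ K) (hS : IsZOrder K S)
    (v : K) (hv : v ∈ S)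
    (a : K) (ha : a ∈ nonZeroDivisors K) :
    (a = σ v * a * v ↔ v * σ v = 1) ∧
      (v * σ v = 1 ↔ ∃ n : ℕ, 0 < n ∧ v ^ n = 1) := by
  rw [← isOfFinOrder_iff_pow_eq_one, isOfFinOrder_iff_forall_norm_eq_one (hS.isIntegral hv)]
  exact ⟨self_eq_mul_mul_iff ha _ _, mul_conj_eq_one_iff_forall_norm_eq_one hconj v⟩

/-- For a conjugation-stable order `S` in a CM-algebra `K`, a unit `v ∈ S^× and a
non-zero-divisor `a ∈ K`: `a = v̄·a·v` iff `v·v̄ = 1`, iff `v` is a torsion unit. -/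
theorem stmt13 {K : Type*} [CommRing K] [Algebra ℚ K] [FiniteDimensional ℚ K] [IsReduced K]
    (σ : K ≃ₐ[ℚ] K) (hinv : ∀ x, σ (σ x) = x)
    (hconj : ∀ φ : K →+* ℂ, ∀ x, φ (σ x) = starRingEnd ℂ (φ x))
    (S : Subalgebra ℤ K) (hS : IsZOrder K S) (hstable : ∀ x ∈ S, σ x ∈ S)
    (v w : K) (hv : v ∈ S) (hw : w ∈ S) (hvw : v * w = 1)
    (a : K) (ha : a ∈ nonZeroDivisors K) :
    (a = σ v * a * v ↔ v * σ v = 1) ∧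
      (v * σ v = 1 ↔ ∃ n : ℕ, 0 < n ∧ v ^ n = 1) :=
  stmt13_general σ hconj S hS v hv a ha
end

section
/- Let h ∈ ℤ[x] be a monic square-free polynomial of even degree 2g with integer coefficients all of whose complex roots have absolute value √q, factored as h = ∏ᵢ hᵢ with hᵢ irreducible. Then h is ordinary (exactly half of its roots, counted in ℚ̄_p, are p-adic units, where q = p^r) if and only if the middle coefficient of h (the coefficient of x^g) is coprime to p. -/
open Polynomial

/-!
On the roots of `h`, which have absolute value `√q`, the map `α ↦ q / α` is complex conjugation,
so it permutes them. This gives the functional equation `h(0) h(x) = x^{2g} h(q / x)`, that is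
`a₀ aᵢ = q^{2g-i} a_{2g-i}`. For `i = 0` it says `a₀ = ±q^g`, and then `aᵢ = ±q^{g-i} a_{2g-i}`
is divisible by `p` for every `i < g`. Hence `x^{g+1}` divides `h mod p` exactly when `p` divides
the middle coefficient `a_g`.
-/

namespace Polynomial

section CommRing

variable {R : Type*} [CommRing R]

theorem coeff_comp_C_mul_X (f : R[X]) (a : R) (n : ℕ) :
    (f.comp (C a * X)).coeff n = a ^ n * f.coeff n := by
  induction f using Polynomial.induction_on' with
  | add f g hf hg => simp [add_comp, hf, hg, mul_add]
  | monomial k b =>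
    simp only [monomial_comp, mul_pow, ← C_pow, ← mul_assoc, ← C_mul, coeff_C_mul_X_pow,
      coeff_monomial]
    rcases eq_or_ne n k with rfl | hnk
    · simp [mul_comm]
    · simp [hnk, hnk.symm]

theorem reverse_C_mul_X_sub_C {q : R} (hq : q ≠ 0) (a : R) :
    (C q * X - C a).reverse = C q - C a * X := by
  rw [sub_eq_add_neg, ← C_neg, reverse_add_C, reverse_mul_X, reverse_C, natDegree_C_mul_X _ hq]
  simp [sub_eq_add_neg]

variable [IsDomain R]

theorem reverse_multiset_prod (s : Multiset R[X]) : s.prod.reverse = (s.map reverse).prod := by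
  induction s using Multiset.induction_on with
  | empty => simpa using reverse_C (1 : R)
  | cons f s ih =>
    rw [Multiset.prod_cons, reverse_mul_of_domain, ih, Multiset.map_cons, Multiset.prod_cons]

theorem coeff_reverse_comp_C_mul_X {q : R} (hq : q ≠ 0) (f : R[X]) {i : ℕ}
    (hi : i ≤ f.natDegree) :
    (f.comp (C q * X)).reverse.coeff i = q ^ (f.natDegree - i) * f.coeff (f.natDegree - i) := by
  rw [coeff_reverse, natDegree_comp, natDegree_C_mul_X _ hq, mul_one, revAt_le hi,
    coeff_comp_C_mul_X]

end CommRing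

/-- The functional equation `f(0) f(x) = xⁿ f(q / x)`, with `xⁿ f(q / x)` written via `reverse`. -/
theorem reverse_comp_C_mul_X_eq_C_coeff_zero_mul {K : Type*} [Field K] {f : K[X]}
    (hm : f.Monic) (hs : f.Splits) {q : K} (hq : q ≠ 0) (h0 : f.coeff 0 ≠ 0)
    (hroots : f.roots.map (q / ·) = f.roots) :
    (f.comp (C q * X)).reverse = C (f.coeff 0) * f := by
  set s := f.roots
  have hf : f = (s.map (X - C ·)).prod := hs.eq_prod_roots_of_monic hm
  have hf_dual : f = (s.map fun a => X - C (q / a)).prod := by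
    conv_lhs => rw [hf, ← hroots, Multiset.map_map]
    rfl
  have hs0 : ∀ a ∈ s, a ≠ 0 := by
    rintro a ha rfl
    exact h0 (by rwa [coeff_zero_eq_eval_zero, ← IsRoot, ← mem_roots hm.ne_zero])
  have hcoeff : f.coeff 0 = (s.map fun a => -a).prod := by
    conv_lhs => rw [hf]
    simp [coeff_zero_eq_eval_zero, eval_multiset_prod]
  calc (f.comp (C q * X)).reverse = (s.map fun a => C q - C a * X).prod := by
        conv_lhs => rw [hf]
        simp only [multiset_prod_comp, Multiset.map_map, Function.comp_apply, sub_comp, X_comp,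
          C_comp, reverse_multiset_prod, reverse_C_mul_X_sub_C hq]
    _ = (s.map fun a => C (-a) * (X - C (q / a))).prod := by
        refine congrArg _ (Multiset.map_congr rfl fun a ha => ?_)
        rw [mul_sub, ← C_mul, neg_mul, mul_div_cancel₀ _ (hs0 a ha), C_neg, C_neg]
        ring
    _ = C (f.coeff 0) * f := by
        rw [Multiset.prod_map_mul, hcoeff, ← Multiset.prod_hom' _ C, hf_dual]

end Polynomial

theorem Complex.ne_zero_of_norm_eq_sqrt {q : ℝ} (hq : 0 < q) {z : ℂ} (hz : ‖z‖ = √q) : z ≠ 0 :=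
  norm_ne_zero_iff.mp (hz ▸ (Real.sqrt_pos.mpr hq).ne')

theorem Complex.div_eq_conj_of_norm_eq_sqrt {q : ℝ} (hq : 0 < q) {z : ℂ} (hz : ‖z‖ = √q) :
    (q : ℂ) / z = (starRingEnd ℂ) z := by
  rw [div_eq_iff (ne_zero_of_norm_eq_sqrt hq hz), Complex.conj_mul', hz, ← Complex.ofReal_pow,
    Real.sq_sqrt hq.le]

namespace Polynomial

theorem map_conj_roots_map_intCast (h : ℤ[X]) :
    (h.map (Int.castRingHom ℂ)).roots.map (starRingEnd ℂ) = (h.map (Int.castRingHom ℂ)).roots := by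
  rw [← (IsAlgClosed.splits _).roots_map, map_map,
    Subsingleton.elim ((starRingEnd ℂ).comp _) (Int.castRingHom ℂ)]

theorem map_div_roots_map_intCast_of_norm_eq_sqrt (h : ℤ[X]) {q : ℝ} (hq : 0 < q)
    (habs : ∀ z : ℂ, aeval z h = 0 → ‖z‖ = √q) :
    (h.map (Int.castRingHom ℂ)).roots.map ((q : ℂ) / ·) = (h.map (Int.castRingHom ℂ)).roots := by
  conv_rhs => rw [← map_conj_roots_map_intCast]
  refine Multiset.map_congr rfl fun z hz => Complex.div_eq_conj_of_norm_eq_sqrt hq (habs z ?_)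
  rw [aeval_def, algebraMap_int_eq, ← eval_map]
  exact (mem_roots'.mp hz).2

theorem coeff_zero_mul_coeff_of_norm_eq_sqrt {h : ℤ[X]} (hm : h.Monic) {q : ℕ} (hq : 0 < q)
    (habs : ∀ z : ℂ, aeval z h = 0 → ‖z‖ = √q) {i : ℕ} (hi : i ≤ h.natDegree) :
    h.coeff 0 * h.coeff i = q ^ (h.natDegree - i) * h.coeff (h.natDegree - i) := by
  set f := h.map (Int.castRingHom ℂ)
  have hq' : (0 : ℝ) < q := Nat.cast_pos.mpr hq
  have h0 : f.coeff 0 ≠ 0 := by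
    rw [coeff_zero_eq_eval_zero, eval_map, ← algebraMap_int_eq, ← aeval_def]
    exact fun h0 => Complex.ne_zero_of_norm_eq_sqrt hq' (habs 0 h0) rfl
  have hroots : f.roots.map ((q : ℂ) / ·) = f.roots := by
    simpa using map_div_roots_map_intCast_of_norm_eq_sqrt h hq' habs
  have hfun := reverse_comp_C_mul_X_eq_C_coeff_zero_mul (hm.map _) (IsAlgClosed.splits f)
    (Nat.cast_ne_zero.mpr hq.ne') h0 hroots
  have hdeg : f.natDegree = h.natDegree := hm.natDegree_map _
  have := congrArg (coeff · i) hfun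
  simp only [coeff_reverse_comp_C_mul_X (Nat.cast_ne_zero.mpr hq.ne') f (hdeg ▸ hi), coeff_C_mul,
    hdeg, f, coeff_map, eq_intCast] at this
  exact_mod_cast this.symm

theorem pow_sub_dvd_coeff_of_coeff_zero_mul_coeff {h : ℤ[X]} (hm : h.Monic) {q : ℤ} (hq : q ≠ 0)
    {g : ℕ} (hdeg : h.natDegree = 2 * g)
    (hsym : ∀ i ≤ h.natDegree,
      h.coeff 0 * h.coeff i = q ^ (h.natDegree - i) * h.coeff (h.natDegree - i))
    {i : ℕ} (hi : i ≤ g) : q ^ (g - i) ∣ h.coeff i := by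
  have hlead : h.coeff (2 * g) = 1 := hdeg ▸ hm.coeff_natDegree
  have hsq : h.coeff 0 ^ 2 = (q ^ g) ^ 2 := by
    have := hsym 0 (by omega)
    rw [hdeg, Nat.sub_zero, hlead] at this
    rw [sq, this, ← pow_mul, mul_comm g, mul_one]
  have hi' := hsym i (by omega)
  rw [hdeg, show q ^ (2 * g - i) = q ^ g * q ^ (g - i) by rw [← pow_add]; congr 1; omega,
    mul_assoc] at hi'
  have : (q ^ g) ^ 2 * h.coeff i ^ 2 = (q ^ g) ^ 2 * (q ^ (g - i) * h.coeff (2 * g - i)) ^ 2 := by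
    linear_combination (h.coeff 0 * h.coeff i + q ^ g * (q ^ (g - i) * h.coeff (2 * g - i))) * hi'
      - h.coeff i ^ 2 * hsq
  rw [mul_right_inj' (pow_ne_zero _ (pow_ne_zero _ hq)), mul_pow] at this
  exact (Int.pow_dvd_pow_iff two_ne_zero).mp ⟨_, this⟩

theorem X_pow_dvd_map_intCast_iff (p : ℕ) (h : ℤ[X]) (n : ℕ) :
    X ^ n ∣ h.map (Int.castRingHom (ZMod p)) ↔ ∀ d < n, (p : ℤ) ∣ h.coeff d := by
  simp [X_pow_dvd_iff, ZMod.intCast_zmod_eq_zero_iff_dvd]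

end Polynomial

theorem stmt18_general (p r g : ℕ) (hp : p.Prime) (hr : 0 < r)
    (q : ℕ) (hq : q = p ^ r) (h : Polynomial ℤ)
    (hm : h.Monic) (hdeg : h.natDegree = 2 * g)
    (habs : ∀ z : ℂ, Polynomial.aeval z h = 0 → ‖z‖ = Real.sqrt q) :
    ¬ ((Polynomial.X : Polynomial (ZMod p)) ^ (g + 1) ∣ h.map (Int.castRingHom (ZMod p)))
      ↔ IsCoprime (h.coeff g) (p : ℤ) := by
  have hq0 : 0 < q := hq ▸ pow_pos hp.pos r
  have hpq : (p : ℤ) ∣ q := by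
    rw [hq]
    push_cast
    exact dvd_pow_self _ hr.ne'
  have hlow : ∀ i < g, (p : ℤ) ∣ h.coeff i := fun i hi =>
    hpq.trans <| (dvd_pow_self _ (by omega)).trans <|
      pow_sub_dvd_coeff_of_coeff_zero_mul_coeff hm (by exact_mod_cast hq0.ne') hdeg
        (fun _ hj => coeff_zero_mul_coeff_of_norm_eq_sqrt hm hq0 habs hj) hi.le
  rw [X_pow_dvd_map_intCast_iff, Nat.forall_lt_succ_right, isCoprime_comm,
    (Nat.prime_iff_prime_int.mp hp).coprime_iff_not_dvd]
  exact not_congr (and_iff_right hlow)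

/-- A square-free `q`-Weil polynomial `h` of degree `2g` (`q = p^r`) is ordinary (exactly
half of its roots are `p`-adic units; equivalently `h mod p` is not divisible by
`x^{g+1}`) if and only if its middle coefficient is coprime to `p`. -/
theorem stmt18 (p r g : ℕ) (hp : p.Prime) (hr : 0 < r) (hg : 0 < g)
    (q : ℕ) (hq : q = p ^ r) (h : Polynomial ℤ)
    (hm : h.Monic) (hsf : Squarefree h) (hdeg : h.natDegree = 2 * g)
    (habs : ∀ z : ℂ, Polynomial.aeval z h = 0 → ‖z‖ = Real.sqrt q) :
    ¬ ((Polynomial.X : Polynomial (ZMod p)) ^ (g + 1) ∣ h.map (Int.castRingHom (ZMod p)))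
      ↔ IsCoprime (h.coeff g) (p : ℤ) :=
  stmt18_general p r g hp hr q hq h hm hdeg habs
end
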